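/- Let k be a field, and in the polynomial ring k[x_0,x_1,x_2,x_3,x_4] consider the 2 × 6 matrix B₁ with rows (x_0², x_1², 0, x_2², x_3², 0) and (0, x_0², x_1², 0, x_2², x_3x_4), and the 6 × 2 matrix A₁ with rows (−x_2², −x_3²), (0, −x_2²), (−x_3x_4, 0), (x_0², x_1²), (0, x_0²), (x_1², 0). Then: (1) B₁·A₁ = 0; (2) for nonzero v = (v_0,…,v_4) ∈ k^5, the evaluated matrices A₁(v) and B₁(v) both have rank 2 unless v is a scalar multiple of (0,0,0,1,0) or of (0,0,0,0,1), and at those two points both matrices have rank strictly less than 2; and (3) neither (0,0,0,1,0) nor (0,0,0,0,1) satisfies x_0²+x_1²+x_2²+x_3²+x_4² = 0, so A₁ and B₁ have maximal rank at every point of the quadric threefold Q_3 ⊂ ℙ⁴. -/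
import Mathlib


open MvPolynomial

/-- The matrix `B₁` of the second explicit example on the quadric threefold `Q₃ ⊂ ℙ⁴`. -/
noncomputable def exB1 (k : Type*) [Field k] : Matrix (Fin 2) (Fin 6) (MvPolynomial (Fin 5) k) :=
  !![X 0 ^ 2, X 1 ^ 2, 0, X 2 ^ 2, X 3 ^ 2, 0;
     0, X 0 ^ 2, X 1 ^ 2, 0, X 2 ^ 2, X 3 * X 4]

/-- The matrix `A₁` of the second explicit example on the quadric threefold `Q₃ ⊂ ℙ⁴`. -/
noncomputable def exA1 (k : Type*) [Field k] : Matrix (Fin 6) (Fin 2) (MvPolynomial (Fin 5) k) :=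
  !![-X 2 ^ 2, -X 3 ^ 2;
     0, -X 2 ^ 2;
     -(X 3 * X 4), 0;
     X 0 ^ 2, X 1 ^ 2;
     0, X 0 ^ 2;
     X 1 ^ 2, 0]

section Aux

variable {k : Type*} [Field k]

lemma rank_eq_two_aux {m : Type*} [Fintype m] (M : Matrix m (Fin 2) k) (i0 i1 : m)
    (h : M i0 0 * M i1 1 - M i0 1 * M i1 0 ≠ 0) : M.rank = 2 := by
  refine le_antisymm (M.rank_le_card_width.trans (by simp)) ?_
  have hinj : Function.Injective M.mulVecLin := by
    rw [← LinearMap.ker_eq_bot, LinearMap.ker_eq_bot']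
    intro x hx
    have e0 : M i0 0 * x 0 + M i0 1 * x 1 = 0 := by
      simpa [Matrix.mulVec, dotProduct, Fin.sum_univ_two] using congrFun hx i0
    have e1 : M i1 0 * x 0 + M i1 1 * x 1 = 0 := by
      simpa [Matrix.mulVec, dotProduct, Fin.sum_univ_two] using congrFun hx i1
    have hx0 : (M i0 0 * M i1 1 - M i0 1 * M i1 0) * x 0 = 0 := by
      linear_combination M i1 1 * e0 - M i0 1 * e1
    have hx1 : (M i0 0 * M i1 1 - M i0 1 * M i1 0) * x 1 = 0 := by
      linear_combination M i0 0 * e1 - M i1 0 * e0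
    have h0 : x 0 = 0 := by
      rcases mul_eq_zero.1 hx0 with h' | h' ; · exact absurd h' h
      · exact h'
    have h1 : x 1 = 0 := by
      rcases mul_eq_zero.1 hx1 with h' | h' ; · exact absurd h' h
      · exact h'
    funext i
    fin_cases i <;> assumption
  rw [Matrix.rank, LinearMap.finrank_range_of_inj hinj]
  simp

lemma rank_lt_two_aux {m n : Type*} [Fintype m] [Fintype n] (M : Matrix m n k)
    (u : Matrix m (Fin 1) k) (w : Matrix (Fin 1) n k) (h : M = u * w) : M.rank < 2 := by
  have h1 : M.rank ≤ 1 := by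
    rw [h]
    exact (Matrix.rank_mul_le_left u w).trans (by simpa using u.rank_le_card_width)
  omega

end Aux

/-- the explicit pair `(A₁,B₁)` satisfies `B₁·A₁ = 0`; for nonzero
`v ∈ k⁵`, both evaluated matrices have rank `2` unless `v` is a scalar multiple of
`(0,0,0,1,0)` or of `(0,0,0,0,1)`, and at those two points both have rank `< 2`; and
neither of those two points lies on the quadric `x₀²+x₁²+x₂²+x₃²+x₄² = 0`, so `A₁` and
`B₁` have maximal rank at every point of the quadric threefold `Q₃ ⊂ ℙ⁴`. -/
theorem quadric_example_two (k : Type*) [Field k] :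
    exB1 k * exA1 k = 0 ∧
    (∀ v : Fin 5 → k, v ≠ 0 →
      (¬(∃ t : k, v = t • ![(0 : k), 0, 0, 1, 0] ∨ v = t • ![(0 : k), 0, 0, 0, 1]) →
        ((exA1 k).map (MvPolynomial.eval v)).rank = 2 ∧
        ((exB1 k).map (MvPolynomial.eval v)).rank = 2) ∧
      ((∃ t : k, v = t • ![(0 : k), 0, 0, 1, 0] ∨ v = t • ![(0 : k), 0, 0, 0, 1]) →
        ((exA1 k).map (MvPolynomial.eval v)).rank < 2 ∧
        ((exB1 k).map (MvPolynomial.eval v)).rank < 2)) ∧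
    ((0 : k) ^ 2 + 0 ^ 2 + 0 ^ 2 + 1 ^ 2 + 0 ^ 2 ≠ 0 ∧
      (0 : k) ^ 2 + 0 ^ 2 + 0 ^ 2 + 0 ^ 2 + 1 ^ 2 ≠ 0) := by
  refine ⟨?_, ?_, by simp, by simp⟩
  · ext i j
    fin_cases i <;> fin_cases j <;>
      · simp [exB1, exA1, Matrix.mul_apply, Fin.sum_univ_succ]
        ring
  intro v hv
  constructor
  · intro hne
    have hcases : v 0 ≠ 0 ∨ v 1 ≠ 0 ∨ v 2 ≠ 0 ∨ (v 3 ≠ 0 ∧ v 4 ≠ 0) := by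
      by_contra hcon
      push_neg at hcon
      obtain ⟨h0, h1, h2, h34⟩ := hcon
      rcases eq_or_ne (v 3) 0 with h3 | h3
      · exact hne ⟨v 4, Or.inr (by funext i; fin_cases i <;> simp [h0, h1, h2, h3])⟩
      · exact hne ⟨v 3, Or.inl (by funext i; fin_cases i <;> simp [h0, h1, h2, h34 h3])⟩
    set MA := (exA1 k).map (MvPolynomial.eval v) with hMA
    set MB := (exB1 k).map (MvPolynomial.eval v) with hMB
    have hBT : MB.rank = MB.transpose.rank := (Matrix.rank_transpose MB).symm
    rcases hcases with h | h | h | ⟨h3, h4⟩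
    · constructor
      · apply rank_eq_two_aux MA 3 4
        have E : MA 3 0 * MA 4 1 - MA 3 1 * MA 4 0 = v 0 ^ 4 := by
          simp [hMA, exA1, show (5 : Fin 6) = Fin.succ 4 from rfl, Matrix.cons_val_succ,
            Matrix.vecHead, Matrix.vecTail]
          ring
        rw [E]; exact pow_ne_zero 4 h
      · rw [hBT]
        apply rank_eq_two_aux MB.transpose 0 1
        have E : MB.transpose 0 0 * MB.transpose 1 1 - MB.transpose 0 1 * MB.transpose 1 0
            = v 0 ^ 4 := by
          simp [hMB, exB1, show (5 : Fin 6) = Fin.succ 4 from rfl, Matrix.cons_val_succ,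
            Matrix.vecHead, Matrix.vecTail]
          ring
        rw [E]; exact pow_ne_zero 4 h
    · constructor
      · apply rank_eq_two_aux MA 3 5
        have E : MA 3 0 * MA 5 1 - MA 3 1 * MA 5 0 = -(v 1 ^ 4) := by
          simp [hMA, exA1, show (5 : Fin 6) = Fin.succ 4 from rfl, Matrix.cons_val_succ,
            Matrix.vecHead, Matrix.vecTail]
          ring
        rw [E]; exact neg_ne_zero.2 (pow_ne_zero 4 h)
      · rw [hBT]
        apply rank_eq_two_aux MB.transpose 1 2
        have E : MB.transpose 1 0 * MB.transpose 2 1 - MB.transpose 1 1 * MB.transpose 2 0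
            = v 1 ^ 4 := by
          simp [hMB, exB1, show (5 : Fin 6) = Fin.succ 4 from rfl, Matrix.cons_val_succ,
            Matrix.vecHead, Matrix.vecTail]
          ring
        rw [E]; exact pow_ne_zero 4 h
    · constructor
      · apply rank_eq_two_aux MA 0 1
        have E : MA 0 0 * MA 1 1 - MA 0 1 * MA 1 0 = v 2 ^ 4 := by
          simp [hMA, exA1, show (5 : Fin 6) = Fin.succ 4 from rfl, Matrix.cons_val_succ,
            Matrix.vecHead, Matrix.vecTail]
          ring
        rw [E]; exact pow_ne_zero 4 h
      · rw [hBT]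
        apply rank_eq_two_aux MB.transpose 3 4
        have E : MB.transpose 3 0 * MB.transpose 4 1 - MB.transpose 3 1 * MB.transpose 4 0
            = v 2 ^ 4 := by
          simp [hMB, exB1, show (5 : Fin 6) = Fin.succ 4 from rfl, Matrix.cons_val_succ,
            Matrix.vecHead, Matrix.vecTail]
          ring
        rw [E]; exact pow_ne_zero 4 h
    · constructor
      · apply rank_eq_two_aux MA 0 2
        have E : MA 0 0 * MA 2 1 - MA 0 1 * MA 2 0 = -(v 3 ^ 3 * v 4) := by
          simp [hMA, exA1, show (5 : Fin 6) = Fin.succ 4 from rfl, Matrix.cons_val_succ,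
            Matrix.vecHead, Matrix.vecTail]
          ring
        rw [E]; exact neg_ne_zero.2 (mul_ne_zero (pow_ne_zero 3 h3) h4)
      · rw [hBT]
        apply rank_eq_two_aux MB.transpose 4 5
        have E : MB.transpose 4 0 * MB.transpose 5 1 - MB.transpose 4 1 * MB.transpose 5 0
            = v 3 ^ 3 * v 4 := by
          simp [hMB, exB1, show (5 : Fin 6) = Fin.succ 4 from rfl, Matrix.cons_val_succ,
            Matrix.vecHead, Matrix.vecTail]
          ring
        rw [E]; exact mul_ne_zero (pow_ne_zero 3 h3) h4
  · rintro ⟨t, ht | ht⟩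
    · have h0 : v 0 = 0 := by rw [ht]; simp
      have h1 : v 1 = 0 := by rw [ht]; simp
      have h2 : v 2 = 0 := by rw [ht]; simp
      have h4 : v 4 = 0 := by rw [ht]; simp
      constructor
      · apply rank_lt_two_aux _ !![1; 0; 0; 0; 0; 0] !![0, -(v 3 ^ 2)]
        ext i j
        fin_cases i <;> fin_cases j <;>
          simp [exA1, Matrix.mul_apply, Fin.sum_univ_succ, Matrix.vecHead, Matrix.vecTail,
            show (5 : Fin 6) = Fin.succ 4 from rfl, Matrix.cons_val_succ,
            h0, h1, h2, h4]
      · apply rank_lt_two_aux _ !![1; 0] !![0, 0, 0, 0, v 3 ^ 2, 0]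
        ext i j
        fin_cases i <;> fin_cases j <;>
          simp [exB1, Matrix.mul_apply, Fin.sum_univ_succ, Matrix.vecHead, Matrix.vecTail,
            show (5 : Fin 6) = Fin.succ 4 from rfl, Matrix.cons_val_succ,
            h0, h1, h2, h4]
    · have h0 : v 0 = 0 := by rw [ht]; simp
      have h1 : v 1 = 0 := by rw [ht]; simp
      have h2 : v 2 = 0 := by rw [ht]; simp
      have h3 : v 3 = 0 := by rw [ht]; simp
      constructor
      · apply rank_lt_two_aux _ 0 0
        ext i j
        fin_cases i <;> fin_cases j <;>
          simp [exA1, Matrix.mul_apply, Fin.sum_univ_succ, Matrix.vecHead, Matrix.vecTail,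
            show (5 : Fin 6) = Fin.succ 4 from rfl, Matrix.cons_val_succ,
            h0, h1, h2, h3]
      · apply rank_lt_two_aux _ 0 0
        ext i j
        fin_cases i <;> fin_cases j <;>
          simp [exB1, Matrix.mul_apply, Fin.sum_univ_succ, Matrix.vecHead, Matrix.vecTail,
            show (5 : Fin 6) = Fin.succ 4 from rfl, Matrix.cons_val_succ,
            h0, h1, h2, h3]
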